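/- If (L,·) is an RC-loop, then for all x,y ∈ L the triple (R_y∘R_y, L_{y²}⁻¹∘R_x∘R_x, R_x∘R_x) is an autotopism of L. -/
import Mathlib


theorem stmt {L : Type*} (mul : L → L → L) (e : L)
    (hid : ∀ x, mul e x = x ∧ mul x e = x)
    (hLbij : ∀ a, Function.Bijective (fun x => mul a x))
    (hRbij : ∀ a, Function.Bijective (fun x => mul x a))
    (hRC : ∀ x y z, mul (mul (mul z y) y) x = mul z (mul (mul y y) x)) :
    ∀ x y a b w, mul (mul y y) w = b →
      mul (mul (mul a y) y) (mul (mul w x) x) = mul (mul (mul a b) x) x := by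
  have idl : ∀ x, mul e x = x := fun x => (hid x).1
  have idr : ∀ x, mul x e = x := fun x => (hid x).2
  have Rinj : ∀ c u v, mul u c = mul v c → u = v := fun c u v h => (hRbij c).injective h
  have Linj : ∀ c u v, mul c u = mul c v → u = v := fun c u v h => (hLbij c).injective h
  -- right alternative law: (z*y)*y = z*(y*y)
  have sq : ∀ z y, mul (mul z y) y = mul z (mul y y) := by
    intro z y
    have h := hRC e y z
    rwa [idr, idr] at h
  -- squares lie in the middle nucleus
  have mid : ∀ z y x, mul (mul z (mul y y)) x = mul z (mul (mul y y) x) := by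
    intro z y x
    rw [← sq z y]
    exact hRC x y z
  -- P1 : y*c = e → (y*y)*c = y
  have P1 : ∀ y c, mul y c = e → mul (mul y y) c = y := by
    intro y c hc
    obtain ⟨r, hr⟩ := (hRbij (mul y y)).surjective y
    simp only at hr
    have hry : mul r y = e := by
      apply Rinj y
      rw [idl]
      calc mul (mul r y) y = mul r (mul y y) := sq r y
        _ = y := hr
    apply Linj r
    calc mul r (mul (mul y y) c) = mul (mul r (mul y y)) c := (mid r y c).symm
      _ = mul y c := by rw [hr]
      _ = e := hc
      _ = mul r y := hry.symm
  -- right inverse property : p*c = e → (u*p)*c = u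
  have RIP : ∀ u p c, mul p c = e → mul (mul u p) c = u := by
    intro u p c hc
    obtain ⟨d, hd⟩ := (hRbij (mul p p)).surjective (mul u p)
    simp only at hd
    have hdp : mul d p = u := by
      apply Rinj p
      calc mul (mul d p) p = mul d (mul p p) := sq d p
        _ = mul u p := hd
    calc mul (mul u p) c = mul (mul d (mul p p)) c := by rw [hd]
      _ = mul d (mul (mul p p) c) := mid d p c
      _ = mul d p := by rw [P1 p c hc]
      _ = u := hdp
  -- squares lie in the right nucleus
  have Nr : ∀ c u y, mul (mul c u) (mul y y) = mul c (mul u (mul y y)) := by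
    intro c u y
    obtain ⟨c0, hc0⟩ := (hLbij y).surjective e
    simp only at hc0
    obtain ⟨c1, hc1⟩ := (hLbij u).surjective e
    simp only at hc1
    have hss : mul (mul y y) (mul c0 c0) = e := by
      calc mul (mul y y) (mul c0 c0) = mul (mul (mul y y) c0) c0 := (sq _ c0).symm
        _ = mul y c0 := by rw [P1 y c0 hc0]
        _ = e := hc0
    have key1 : ∀ t, mul (mul y y) (mul (mul c0 c0) t) = t := by
      intro t
      calc mul (mul y y) (mul (mul c0 c0) t)
          = mul (mul (mul y y) (mul c0 c0)) t := (mid _ c0 t).symm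
        _ = mul e t := by rw [hss]
        _ = t := idl t
    have key2 : mul (mul u (mul y y)) (mul (mul c0 c0) c1) = e := by
      calc mul (mul u (mul y y)) (mul (mul c0 c0) c1)
          = mul u (mul (mul y y) (mul (mul c0 c0) c1)) := mid u y _
        _ = mul u c1 := by rw [key1 c1]
        _ = e := hc1
    apply Rinj (mul (mul c0 c0) c1)
    calc mul (mul (mul c u) (mul y y)) (mul (mul c0 c0) c1)
        = mul (mul c u) (mul (mul y y) (mul (mul c0 c0) c1)) := mid (mul c u) y _
      _ = mul (mul c u) c1 := by rw [key1 c1]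
      _ = c := RIP c u c1 hc1
      _ = mul (mul c (mul u (mul y y))) (mul (mul c0 c0) c1) :=
          (RIP c (mul u (mul y y)) (mul (mul c0 c0) c1) key2).symm
  -- the main statement
  intro x y a b w hb
  subst hb
  rw [sq a y, sq w x, sq (mul a (mul (mul y y) w)) x, ← mid a y w]
  exact (Nr (mul a (mul y y)) w x).symm
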